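/- Triviality of the curve-preserving group and inhomogeneity of the curve x⁴ − x²y² + (2/(3√3))xy³ = 1: if A ∈ GL(2,ℝ) satisfies A(H_{2/(3√3),0}) = H_{2/(3√3),0}, then A is the identity matrix. In particular H_{2/(3√3),0} is not a homogeneous space: the group of linear transformations preserving it does not act transitively on it. -/

import Mathlib

/-!
Common definitions: the quartic polynomial `hLK L K (x,y) = x⁴ − x²y² + L·x·y³ + K·y⁴` on ℝ²,
the Hessian determinant of a function on ℝ², and the curve `Hcurve L K = H_{L,K}`,
the connected component containing (1,0) of the hyperbolic points on the level set {h = 1}.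
-/

noncomputable section
open Matrix

/-- `h_{L,K}(x,y) = x⁴ − x²y² + L·x·y³ + K·y⁴`. -/
def hLK (L K : ℝ) (v : Fin 2 → ℝ) : ℝ :=
  v 0 ^ 4 - v 0 ^ 2 * v 1 ^ 2 + L * v 0 * v 1 ^ 3 + K * v 1 ^ 4

/-- Determinant of the Hessian matrix of `f : ℝ² → ℝ` at `p`. -/
def hessDet2 (f : (Fin 2 → ℝ) → ℝ) (p : Fin 2 → ℝ) : ℝ :=
  Matrix.det (Matrix.of fun i j : Fin 2 =>
    iteratedFDeriv ℝ 2 f p ![Pi.single i 1, Pi.single j 1])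

/-- `H_{L,K}`: the connected component containing `(1,0)` of
`{p ∈ ℝ² : h_{L,K}(p) = 1 and p is a hyperbolic point of h_{L,K}}`. -/
def Hcurve (L K : ℝ) : Set (Fin 2 → ℝ) :=
  connectedComponentIn {p | hLK L K p = 1 ∧ hessDet2 (hLK L K) p < 0} ![1, 0]

/-!
Write `L₀ = 2/(3√3)` and `h = h_{L₀,0}`. Then `h = x (√3 x - y)² (3x + 2√3 y) / 9` and
`det Hess h = -(4/3) (y - √3 x)² (y² + 6x²)`. Since `h` vanishes on the lines `x = 0` and
`y = √3 x`, the curve `H` stays in the sector `x > 0, y < √3 x`; and it contains the radial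
projection onto `{h = 1}` of the cone `0 ≤ y < x`.

If `A` preserves `H`, then `h ∘ A = h` on that cone, hence on all of `ℝ²` by the identity
theorem for analytic functions. So `A` permutes the three zero lines of `h`. It fixes the double
line `y = √3 x`, which is the critical locus of `h`. If it also fixes the other two lines, then
`A = ±1`; if it swaps them, then `A (1,0) = λ (1, 4√3)`. The fact that `A (1,0)` lies in the
sector rules out everything except `A = 1`.
-/

open Set Filter Topology

def linForm (a b : ℝ) : (Fin 2 → ℝ) →L[ℝ] ℝ :=
  a • ContinuousLinearMap.proj 0 + b • ContinuousLinearMap.proj 1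

@[simp] lemma linForm_apply (a b : ℝ) (w : Fin 2 → ℝ) : linForm a b w = a * w 0 + b * w 1 := by
  simp [linForm]

lemma hessDet2_eq_of_hasFDerivAt {f fx fy : (Fin 2 → ℝ) → ℝ} {p : Fin 2 → ℝ} {a b c d : ℝ}
    (hf : ∀ v, HasFDerivAt f (linForm (fx v) (fy v)) v)
    (hx : HasFDerivAt fx (linForm a b) p) (hy : HasFDerivAt fy (linForm c d) p) :
    hessDet2 f p = a * d - b * c := by
  have h2 := (hx.smul_const (ContinuousLinearMap.proj (R := ℝ) (φ := fun _ : Fin 2 => ℝ) 0)).fun_add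
    (hy.smul_const (ContinuousLinearMap.proj (R := ℝ) (φ := fun _ : Fin 2 => ℝ) 1))
  have hf' : fderiv ℝ f = fun v => fx v • ContinuousLinearMap.proj 0 +
      fy v • ContinuousLinearMap.proj 1 :=
    funext fun v => (hf v).fderiv
  simp only [hessDet2, iteratedFDeriv_two_apply, hf', h2.fderiv, det_fin_two, of_apply]
  simp [mul_comm]

lemma hasFDerivAt_hLK (L K : ℝ) (v : Fin 2 → ℝ) :
    HasFDerivAt (hLK L K) (linForm (4 * v 0 ^ 3 - 2 * v 0 * v 1 ^ 2 + L * v 1 ^ 3)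
      (-2 * v 0 ^ 2 * v 1 + 3 * L * v 0 * v 1 ^ 2 + 4 * K * v 1 ^ 3)) v := by
  have h0 := hasFDerivAt_apply (𝕜 := ℝ) (f := v) 0
  have h1 := hasFDerivAt_apply (𝕜 := ℝ) (f := v) 1
  refine (((((h0.pow 4).sub ((h0.pow 2).mul (h1.pow 2))).add
    ((h0.const_mul L).mul (h1.pow 3))).add ((h1.pow 4).const_mul K)).congr_fderiv
    (ContinuousLinearMap.ext fun w => ?_)).congr_of_eventuallyEq (.of_forall fun u => ?_)
  · simp only [nsmul_eq_mul, Nat.cast_ofNat, Nat.add_one_sub_one, pow_one, smul_eq_mul,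
      _root_.add_apply, _root_.sub_apply, _root_.smul_apply,
      ContinuousLinearMap.proj_apply, linForm_apply]
    ring
  · simp [hLK]

lemma hasFDerivAt_hLK_dx (L : ℝ) (p : Fin 2 → ℝ) :
    HasFDerivAt (fun v : Fin 2 → ℝ => 4 * v 0 ^ 3 - 2 * v 0 * v 1 ^ 2 + L * v 1 ^ 3)
      (linForm (12 * p 0 ^ 2 - 2 * p 1 ^ 2) (-4 * p 0 * p 1 + 3 * L * p 1 ^ 2)) p := by
  have h0 := hasFDerivAt_apply (𝕜 := ℝ) (f := p) 0
  have h1 := hasFDerivAt_apply (𝕜 := ℝ) (f := p) 1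
  refine (((((h0.pow 3).const_mul 4).sub ((h0.const_mul 2).mul (h1.pow 2))).add
    ((h1.pow 3).const_mul L)).congr_fderiv
    (ContinuousLinearMap.ext fun w => ?_)).congr_of_eventuallyEq (.of_forall fun u => ?_)
  · simp only [nsmul_eq_mul, Nat.cast_ofNat, Nat.add_one_sub_one, pow_one, smul_eq_mul,
      _root_.add_apply, _root_.sub_apply, _root_.smul_apply,
      ContinuousLinearMap.proj_apply, linForm_apply]
    ring
  · simp

lemma hasFDerivAt_hLK_dy (L K : ℝ) (p : Fin 2 → ℝ) :
    HasFDerivAt (fun v : Fin 2 → ℝ => -2 * v 0 ^ 2 * v 1 + 3 * L * v 0 * v 1 ^ 2 + 4 * K * v 1 ^ 3)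
      (linForm (-4 * p 0 * p 1 + 3 * L * p 1 ^ 2)
        (-2 * p 0 ^ 2 + 6 * L * p 0 * p 1 + 12 * K * p 1 ^ 2)) p := by
  have h0 := hasFDerivAt_apply (𝕜 := ℝ) (f := p) 0
  have h1 := hasFDerivAt_apply (𝕜 := ℝ) (f := p) 1
  refine ((((((h0.pow 2).const_mul (-2)).mul h1).add ((h0.const_mul (3 * L)).mul (h1.pow 2))).add
    ((h1.pow 3).const_mul (4 * K))).congr_fderiv
    (ContinuousLinearMap.ext fun w => ?_)).congr_of_eventuallyEq (.of_forall fun u => ?_)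
  · simp only [nsmul_eq_mul, Nat.cast_ofNat, Nat.add_one_sub_one, pow_one, smul_eq_mul,
      _root_.add_apply, _root_.smul_apply,
      ContinuousLinearMap.proj_apply, linForm_apply]
    ring
  · simp

lemma hessDet2_hLK (L K : ℝ) (p : Fin 2 → ℝ) :
    hessDet2 (hLK L K) p = (12 * p 0 ^ 2 - 2 * p 1 ^ 2) *
      (-2 * p 0 ^ 2 + 6 * L * p 0 * p 1 + 12 * K * p 1 ^ 2) -
        (-4 * p 0 * p 1 + 3 * L * p 1 ^ 2) ^ 2 := by
  rw [hessDet2_eq_of_hasFDerivAt (hasFDerivAt_hLK L K) (hasFDerivAt_hLK_dx L p)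
    (hasFDerivAt_hLK_dy L K p)]
  ring

lemma hLK_smul (L K c : ℝ) (v : Fin 2 → ℝ) : hLK L K (c • v) = c ^ 4 * hLK L K v := by
  simp only [hLK, Pi.smul_apply, smul_eq_mul]; ring

lemma one_zero_mem_Hcurve (L K : ℝ) : ![1, 0] ∈ Hcurve L K :=
  mem_connectedComponentIn ⟨by simp [hLK], by rw [hessDet2_hLK]; norm_num⟩

lemma continuous_hLK (L K : ℝ) : Continuous (hLK L K) := by
  unfold hLK; fun_prop

@[fun_prop]
lemma analyticAt_apply_fin_two (i : Fin 2) (v : Fin 2 → ℝ) :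
    AnalyticAt ℝ (fun u : Fin 2 → ℝ => u i) v :=
  (ContinuousLinearMap.proj (R := ℝ) (φ := fun _ : Fin 2 => ℝ) i).analyticAt v

lemma analyticOnNhd_hLK (L K : ℝ) : AnalyticOnNhd ℝ (hLK L K) univ := by
  intro v _; unfold hLK; fun_prop

lemma fderiv_eq_zero_of_comp_eq {𝕜 E F : Type*} [NontriviallyNormedField 𝕜]
    [NormedAddCommGroup E] [NormedSpace 𝕜 E] [NormedAddCommGroup F] [NormedSpace 𝕜 F]
    (e : E ≃L[𝕜] E) {f : E → F} (hfe : f ∘ e = f) {x : E} (hx : fderiv 𝕜 f x = 0) :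
    fderiv 𝕜 f (e x) = 0 := by
  have h := e.comp_right_fderiv (f := f) (x := x)
  rw [hfe, hx] at h
  ext y
  simpa using congr($h (e.symm y)).symm

lemma pos_of_mem_connectedComponentIn {X : Type*} [TopologicalSpace X] {F : Set X} {x y : X}
    {f : X → ℝ} (hf : Continuous f) (hF : ∀ z ∈ F, f z ≠ 0) (hx : 0 < f x)
    (hy : y ∈ connectedComponentIn F x) : 0 < f y := by
  by_contra! hneg
  have hxF : x ∈ F := connectedComponentIn_nonempty_iff.mp ⟨y, hy⟩
  obtain ⟨z, hz, hz0⟩ := isPreconnected_connectedComponentIn.intermediate_value hy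
    (mem_connectedComponentIn hxF) hf.continuousOn ⟨hneg, hx.le⟩
  exact hF z (connectedComponentIn_subset _ _ hz) hz0

lemma sqrt_sqrt_pow_four {a : ℝ} (ha : 0 ≤ a) : √√a ^ 4 = a := by
  rw [show 4 = 2 * 2 from rfl, pow_mul, Real.sq_sqrt (Real.sqrt_nonneg a), Real.sq_sqrt ha]

def scaleToLevelOne (f : (Fin 2 → ℝ) → ℝ) (v : Fin 2 → ℝ) : Fin 2 → ℝ := (√√(f v))⁻¹ • v

lemma apply_scaleToLevelOne {f : (Fin 2 → ℝ) → ℝ} (hf : ∀ (c : ℝ) v, f (c • v) = c ^ 4 * f v)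
    {v : Fin 2 → ℝ} (hv : 0 < f v) : f (scaleToLevelOne f v) = 1 := by
  rw [scaleToLevelOne, hf, inv_pow, sqrt_sqrt_pow_four hv.le, inv_mul_cancel₀ hv.ne']

lemma continuousOn_scaleToLevelOne {f : (Fin 2 → ℝ) → ℝ} (hf : Continuous f)
    {s : Set (Fin 2 → ℝ)} (hs : ∀ v ∈ s, 0 < f v) : ContinuousOn (scaleToLevelOne f) s :=
  (hf.sqrt.sqrt.continuousOn.inv₀ fun v hv =>
    (Real.sqrt_pos.2 (Real.sqrt_pos.2 (hs v hv))).ne').smul continuousOn_id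

local notation "L₀" => (2 / (3 * √3) : ℝ)

local notation "h₀" => hLK L₀ 0

lemma one_lt_sqrt_three : 1 < √3 := Real.lt_sqrt_of_sq_lt (by norm_num)

lemma sqrt_three_sq : √3 ^ 2 = 3 := Real.sq_sqrt (by norm_num)

lemma L₀_eq : L₀ = 2 * √3 / 9 := by
  field_simp
  linear_combination -3 * sqrt_three_sq

lemma hLK_L₀_eq (v : Fin 2 → ℝ) :
    h₀ v = v 0 * (√3 * v 0 - v 1) ^ 2 * (3 * v 0 + 2 * √3 * v 1) / 9 := by
  rw [hLK, L₀_eq]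
  linear_combination
    (-3 * v 0 ^ 4 - 2 * √3 * v 0 ^ 3 * v 1 + 4 * v 0 ^ 2 * v 1 ^ 2) / 9 * sqrt_three_sq

lemma hLK_L₀_eq_zero_iff (v : Fin 2 → ℝ) :
    h₀ v = 0 ↔ v 0 = 0 ∨ v 1 = √3 * v 0 ∨ 3 * v 0 + 2 * √3 * v 1 = 0 := by
  rw [hLK_L₀_eq]
  simp [sub_eq_zero, eq_comm (a := v 1), or_assoc]

lemma ne_zero_of_hLK_L₀_eq_one {v : Fin 2 → ℝ} (hv : h₀ v = 1) :
    v 0 ≠ 0 ∧ √3 * v 0 - v 1 ≠ 0 := by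
  rw [hLK_L₀_eq] at hv
  constructor <;> intro h <;> simp [h] at hv

lemma hessDet2_hLK_L₀ (v : Fin 2 → ℝ) :
    hessDet2 h₀ v = -(4 / 3) * (v 1 - √3 * v 0) ^ 2 * (v 1 ^ 2 + 6 * v 0 ^ 2) := by
  rw [hessDet2_hLK, L₀_eq]
  linear_combination (8 * v 0 ^ 4 + 4 / 3 * v 0 ^ 2 * v 1 ^ 2 - 4 / 9 * v 1 ^ 4) * sqrt_three_sq

lemma hessDet2_hLK_L₀_neg {v : Fin 2 → ℝ} (hv : v 1 ≠ √3 * v 0) : hessDet2 h₀ v < 0 := by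
  rw [hessDet2_hLK_L₀]
  have hsq : 0 < (v 1 - √3 * v 0) ^ 2 := by positivity
  have hnorm : 0 < v 1 ^ 2 + 6 * v 0 ^ 2 := by
    by_contra! h
    have h0 : v 0 = 0 := by nlinarith
    have h1 : v 1 = 0 := by nlinarith
    exact hv (by simp [h0, h1])
  linarith [mul_pos hsq hnorm]

lemma eq_sqrt_three_mul_of_fderiv_hLK_L₀_eq_zero {v : Fin 2 → ℝ} (hv : fderiv ℝ h₀ v = 0) :
    v 1 = √3 * v 0 := by
  rw [(hasFDerivAt_hLK _ _ v).fderiv] at hv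
  have hx : 4 * v 0 ^ 3 - 2 * v 0 * v 1 ^ 2 + 2 * √3 / 9 * v 1 ^ 3 = 0 := by
    simpa [L₀_eq] using congr($hv ![1, 0])
  have hy : -(2 * v 0 ^ 2 * v 1) + 3 * (2 * √3 / 9) * v 0 * v 1 ^ 2 = 0 := by
    simpa [L₀_eq] using congr($hv ![0, 1])
  have hfac : v 0 * v 1 * (√3 * v 1 - 3 * v 0) = 0 := by linear_combination 3 / 2 * hy
  rcases mul_eq_zero.1 hfac with h | h
  · rcases mul_eq_zero.1 h with h0 | h1
    · have h1 : v 1 = 0 := by simpa [h0] using hx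
      simp [h0, h1]
    · have h0 : v 0 = 0 := by simpa [h1] using hx
      simp [h0, h1]
  · linear_combination √3 / 3 * h - v 1 / 3 * sqrt_three_sq

lemma fderiv_hLK_L₀_one_sqrt_three : fderiv ℝ h₀ ![1, √3] = 0 := by
  rw [(hasFDerivAt_hLK _ _ _).fderiv]
  ext w
  simp only [linForm_apply, cons_val_zero, cons_val_one, cons_val_fin_one, one_pow, mul_one,
    mul_zero, L₀_eq, _root_.zero_apply]
  linear_combination ((2 / 9 * (√3 ^ 2 + 3) - 2) * w 0 + 2 / 3 * √3 * w 1) * sqrt_three_sq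

def sector : Set (Fin 2 → ℝ) := {v | 0 ≤ v 1 ∧ v 1 < v 0}

lemma convex_sector : Convex ℝ sector := by
  rintro v ⟨hv1, hv2⟩ w ⟨hw1, hw2⟩ a b ha hb hab
  have hm : 0 < min (v 0 - v 1) (w 0 - w 1) := lt_min (sub_pos.2 hv2) (sub_pos.2 hw2)
  simp only [sector, mem_ofPred, Pi.add_apply, Pi.smul_apply, smul_eq_mul]
  refine ⟨by positivity, ?_⟩
  nlinarith [mul_le_mul_of_nonneg_left (min_le_left (v 0 - v 1) (w 0 - w 1)) ha,
    mul_le_mul_of_nonneg_left (min_le_right (v 0 - v 1) (w 0 - w 1)) hb]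

lemma sector_mem_nhds : sector ∈ 𝓝 ![2, 1] := by
  refine mem_of_superset ?_ (fun v (hv : 0 < v 1 ∧ v 1 < v 0) => ⟨hv.1.le, hv.2⟩)
  exact ((isOpen_lt continuous_const (continuous_apply 1)).inter
    (isOpen_lt (continuous_apply 1) (continuous_apply 0))).mem_nhds (by norm_num)

lemma lt_sqrt_three_mul_of_mem_sector {v : Fin 2 → ℝ} (hv : v ∈ sector) : v 1 < √3 * v 0 := by
  nlinarith [one_lt_sqrt_three, hv.1, hv.2]

lemma hLK_L₀_pos_of_mem_sector {v : Fin 2 → ℝ} (hv : v ∈ sector) : 0 < h₀ v := by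
  rw [hLK_L₀_eq]
  have : 0 < v 0 := hv.1.trans_lt hv.2
  have : 0 < √3 * v 0 - v 1 := sub_pos.2 (lt_sqrt_three_mul_of_mem_sector hv)
  have : 0 ≤ v 1 := hv.1
  positivity

lemma scaleToLevelOne_mem_Hcurve {v : Fin 2 → ℝ} (hv : v ∈ sector) :
    scaleToLevelOne h₀ v ∈ Hcurve L₀ 0 := by
  refine (convex_sector.isPreconnected.image _ (continuousOn_scaleToLevelOne (continuous_hLK _ _)
    fun w => hLK_L₀_pos_of_mem_sector)).subset_connectedComponentIn
    ⟨![1, 0], ⟨le_rfl, zero_lt_one⟩, by simp [scaleToLevelOne, hLK]⟩ ?_ (mem_image_of_mem _ hv)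
  rintro _ ⟨w, hw, rfl⟩
  have hpos := hLK_L₀_pos_of_mem_sector hw
  refine ⟨apply_scaleToLevelOne (hLK_smul _ _) hpos, hessDet2_hLK_L₀_neg ?_⟩
  have hc : 0 < (√√(h₀ w))⁻¹ := by positivity
  simp only [scaleToLevelOne, Pi.smul_apply, smul_eq_mul]
  nlinarith [mul_pos hc (sub_pos.2 (lt_sqrt_three_mul_of_mem_sector hw))]

lemma pos_of_mem_Hcurve {p : Fin 2 → ℝ} (hp : p ∈ Hcurve L₀ 0) :
    0 < p 0 ∧ p 1 < √3 * p 0 := by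
  refine ⟨pos_of_mem_connectedComponentIn (f := fun v => v 0) (continuous_apply 0)
    (fun z hz => (ne_zero_of_hLK_L₀_eq_one hz.1).1) (by simp) hp, ?_⟩
  have := pos_of_mem_connectedComponentIn (f := fun v => √3 * v 0 - v 1) (by fun_prop)
    (fun z hz => (ne_zero_of_hLK_L₀_eq_one hz.1).2) (by simp) hp
  linarith

lemma hLK_L₀_comp_mulVec_eq_of_mapsTo {A : Matrix (Fin 2) (Fin 2) ℝ}
    (hA : MapsTo A.mulVec (Hcurve L₀ 0) (Hcurve L₀ 0)) :
    (fun v => h₀ (A *ᵥ v)) = h₀ := by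
  have hsector : ∀ v ∈ sector, h₀ (A *ᵥ v) = h₀ v := by
    intro v hv
    have hpos := hLK_L₀_pos_of_mem_sector hv
    have h1 := (connectedComponentIn_subset _ _ (hA (scaleToLevelOne_mem_Hcurve hv))).1
    rw [scaleToLevelOne, mulVec_smul, hLK_smul, inv_pow, sqrt_sqrt_pow_four hpos.le] at h1
    field_simp at h1
    exact h1
  have hAn : AnalyticOnNhd ℝ (fun v => h₀ (A *ᵥ v)) univ :=
    (analyticOnNhd_hLK _ _).comp (A.mulVecLin.toContinuousLinearMap.analyticOnNhd univ)
      (mapsTo_univ _ _)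
  exact hAn.eq_of_eventuallyEq (analyticOnNhd_hLK _ _) (eventually_of_mem sector_mem_nhds hsector)

lemma mulVec_one_sqrt_three_of_comp_eq {A : Matrix (Fin 2) (Fin 2) ℝ} (hA : IsUnit A)
    (hinv : (fun v => h₀ (A *ᵥ v)) = h₀) :
    (A *ᵥ ![1, √3]) 1 = √3 * (A *ᵥ ![1, √3]) 0 :=
  eq_sqrt_three_mul_of_fderiv_hLK_L₀_eq_zero <| fderiv_eq_zero_of_comp_eq (f := h₀)
    (A.toLinearEquiv' hA.invertible).toContinuousLinearEquiv hinv fderiv_hLK_L₀_one_sqrt_three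

lemma entries_scalar_of_hLK_L₀_comp_mulVec_eq {A : Matrix (Fin 2) (Fin 2) ℝ} (hdet : A.det ≠ 0)
    (hinv : ∀ v, h₀ (A *ᵥ v) = h₀ v) (hcrit : (A *ᵥ ![1, √3]) 1 = √3 * (A *ᵥ ![1, √3]) 0)
    (hpos : 0 < A 0 0) (hslope : A 1 0 < √3 * A 0 0) :
    A 0 1 = 0 ∧ A 1 0 = 0 ∧ A 1 1 = A 0 0 := by
  have h3 := sqrt_three_sq
  have he₁ := hinv ![0, 1]
  have he₂ := hinv ![2, -√3]
  have hz₂ : 3 * (![2, -√3] : Fin 2 → ℝ) 0 + 2 * √3 * ![2, -√3] 1 = 0 := by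
    simp only [cons_val_zero, cons_val_one, cons_val_fin_one]
    linear_combination -2 * h3
  rw [(hLK_L₀_eq_zero_iff ![0, 1]).2 (by simp), mulVec_fin_two, hLK_L₀_eq_zero_iff] at he₁
  rw [(hLK_L₀_eq_zero_iff ![2, -√3]).2 (.inr (.inr hz₂)), mulVec_fin_two, hLK_L₀_eq_zero_iff] at he₂
  rw [mulVec_fin_two] at hcrit
  rw [det_fin_two] at hdet
  simp only [cons_val_zero, cons_val_one, cons_val_fin_one, mul_zero, mul_one, zero_add,
    mul_neg] at he₁ he₂ hcrit
  set p := A 0 0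
  set q := A 0 1
  set r := A 1 0
  set s := A 1 1
  have hr : r ≠ √3 * p := hslope.ne
  -- `A (0,1)` and `A (2,-√3)` lie on the zero lines `x = 0`, `y = √3 x`, `3x + 2√3 y = 0`
  rcases he₁ with hq | hq | hq
  · rcases he₂ with hu | hu | hu
    · rw [hq] at hu; linarith
    · exact (hr (by linear_combination (hcrit + hu) / 3)).elim
    · have hps : p = s := by
        linear_combination
          (hu - 4 * √3 * hcrit - (4 * p - 6 * s + 4 * √3 * q) * h3 - 9 * √3 * hq) / 18
      exact ⟨hq, by linear_combination hcrit + √3 * hps + √3 ^ 2 * hq, hps.symm⟩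
  · exact (hr (by linear_combination hcrit - √3 * hq)).elim
  · rcases he₂ with hu | hu | hu
    · have : r = 4 * √3 * p := by
        linear_combination hcrit - hq / 2 - 3 * √3 / 2 * hu - q / 2 * h3
      nlinarith [mul_pos (Real.sqrt_pos.2 three_pos) hpos]
    · exact (hr (by linear_combination (hcrit + hu) / 3)).elim
    · exact (hdet (by linear_combination s / 6 * hu - (2 * r - √3 * s) / 6 * hq)).elim

lemma eq_one_of_mapsTo_Hcurve {A : Matrix (Fin 2) (Fin 2) ℝ} (hA : IsUnit A)
    (hmaps : MapsTo A.mulVec (Hcurve L₀ 0) (Hcurve L₀ 0)) : A = 1 := by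
  have hinv := hLK_L₀_comp_mulVec_eq_of_mapsTo hmaps
  obtain ⟨hpos, hslope⟩ := pos_of_mem_Hcurve (hmaps (one_zero_mem_Hcurve _ _))
  simp only [mulVec_fin_two, cons_val_zero, cons_val_one, cons_val_fin_one, mul_one, mul_zero,
    add_zero] at hpos hslope
  obtain ⟨hq, hr, hs⟩ := entries_scalar_of_hLK_L₀_comp_mulVec_eq
    ((isUnit_iff_isUnit_det A).1 hA).ne_zero (congrFun hinv)
    (mulVec_one_sqrt_three_of_comp_eq hA hinv) hpos hslope
  have hp4 : A 0 0 ^ 4 = 1 := by simpa [hLK, hr] using congrFun hinv ![1, 0]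
  have hp1 : A 0 0 = 1 := (pow_eq_one_iff_of_nonneg hpos.le (by norm_num)).1 hp4
  rw [A.eta_fin_two, one_fin_two, hq, hr, hs, hp1]

/-- **Triviality of the curve-preserving group and inhomogeneity of
`x⁴ − x²y² + (2/(3√3))xy³ = 1`.**
Every `A ∈ GL(2,ℝ)` with `A(H_{2/(3√3),0}) = H_{2/(3√3),0}` is the identity; in particular
the group of linear transformations preserving `H_{2/(3√3),0}` does not act transitively
on it. -/
theorem curve_c_trivial_automorphisms_and_inhomogeneous :
    (∀ A : Matrix (Fin 2) (Fin 2) ℝ, IsUnit A →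
      A.mulVec '' Hcurve (2 / (3 * Real.sqrt 3)) 0 = Hcurve (2 / (3 * Real.sqrt 3)) 0 →
      A = 1) ∧
    ¬ (∀ p ∈ Hcurve (2 / (3 * Real.sqrt 3)) 0, ∀ q ∈ Hcurve (2 / (3 * Real.sqrt 3)) 0,
        ∃ A : Matrix (Fin 2) (Fin 2) ℝ, IsUnit A ∧
          A.mulVec '' Hcurve (2 / (3 * Real.sqrt 3)) 0 = Hcurve (2 / (3 * Real.sqrt 3)) 0 ∧
          A.mulVec p = q) := by
  have hfix : ∀ A : Matrix (Fin 2) (Fin 2) ℝ, IsUnit A →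
      A.mulVec '' Hcurve L₀ 0 = Hcurve L₀ 0 → A = 1 :=
    fun A hA hAH => eq_one_of_mapsTo_Hcurve hA ((mapsTo_image _ _).mono_right hAH.le)
  refine ⟨hfix, fun htrans => ?_⟩
  have hq : ![2, 1] ∈ sector := by norm_num [sector]
  obtain ⟨A, hA, hAH, hAq⟩ :=
    htrans _ (one_zero_mem_Hcurve _ _) _ (scaleToLevelOne_mem_Hcurve hq)
  rw [hfix A hA hAH, one_mulVec] at hAq
  have hc : (√√(h₀ ![2, 1]))⁻¹ = 0 := by simpa [scaleToLevelOne] using (congrFun hAq 1).symm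
  exact (inv_pos.2 (Real.sqrt_pos.2 (Real.sqrt_pos.2 (hLK_L₀_pos_of_mem_sector hq)))).ne' hc
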